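/- Let T > 0 and let K : [0,T] → ℝ be continuous with K(s) > 0 for all s ∈ (0,T]. Let φ : ℝ → ℝ be twice continuously differentiable with |φ(x)| ≤ C(1+|x|^κ), |φ'(x)| ≤ C(1+|x|^κ) and |φ''(x)| ≤ C(1+|x|^κ) for all x ∈ ℝ, for some C ≥ 0 and natural number κ. For t ∈ [0,T] set v(t) = ∫_t^T K(T-s)² ds and define u(t,x) = ∫ φ(x + z) dγ_{v(t)}(z). Then for every t ∈ (0,T) and x ∈ ℝ, the partial derivative ∂_t u(t,x) exists, the second partial derivative ∂²_{xx} u(t,x) exists and equals ∫ φ''(x+z) dγ_{v(t)}(z), and together they satisfy the Kolmogorov backward equation ∂_t u(t,x) + (1/2) K(T-t)² ∂²_{xx} u(t,x) = 0; moreover u(T,x) = φ(x) for every x ∈ ℝ. -/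

import Mathlib

/-!
Writing `γ_w` for the centered Gaussian of variance `w`, the map `w ↦ ∫ f (x + z) dγ_w` solves the
heat equation in the variance: substituting `z = √w ζ` with `ζ` standard Gaussian and
differentiating under the integral, the derivative is `(2√w)⁻¹ ∫ f' (x + √w ζ) ζ dγ_1`, which
Stein's identity `∫ ζ ψ(ζ) dγ_1(ζ) = ∫ ψ' dγ_1` turns into `½ ∫ f'' (x + z) dγ_w`. Since
`v' (t) = -K (T - t)²` and `v (t) > 0` for `t < T`, the chain rule gives the backward equation;
polynomial growth of `φ, φ', φ''` supplies every domination, because Gaussians have all moments.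
-/

open MeasureTheory ProbabilityTheory
open Real Filter Set
open scoped NNReal Topology

section PolynomialGrowth

variable {f : ℝ → ℝ} {B : ℝ} {m : ℕ}

lemma one_add_abs_add_le (a b : ℝ) : 1 + |a + b| ≤ (1 + |a|) * (1 + |b|) := by
  nlinarith [abs_add_le a b, abs_nonneg a, abs_nonneg b]

lemma one_add_abs_mul_le (a b : ℝ) : 1 + |a * b| ≤ (1 + |a|) * (1 + |b|) := by
  nlinarith [abs_mul a b, abs_nonneg a, abs_nonneg b]

lemma one_add_abs_le_of_mem_ball {x y : ℝ} (hy : y ∈ Metric.ball x 1) : 1 + |y| ≤ 2 + |x| := by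
  rw [Metric.mem_ball, Real.dist_eq] at hy
  linarith [abs_sub_abs_le_abs_sub y x]

lemma abs_le_two_mul_one_add_abs_pow (hf : ∀ y, |f y| ≤ B * (1 + |y| ^ m)) (y : ℝ) :
    |f y| ≤ 2 * B * (1 + |y|) ^ m := by
  have h1 : 1 ≤ (1 + |y|) ^ m := one_le_pow₀ (by linarith [abs_nonneg y])
  have h2 : |y| ^ m ≤ (1 + |y|) ^ m := pow_le_pow_left₀ (abs_nonneg y) (by linarith) m
  have hB : 0 ≤ B :=
    (mul_nonneg_iff_of_pos_right (by positivity)).1 ((abs_nonneg _).trans (hf y))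
  nlinarith [hf y]

lemma nonneg_of_abs_le_mul_one_add_abs_pow (hf : ∀ y, |f y| ≤ B * (1 + |y|) ^ m) : 0 ≤ B := by
  simpa using (abs_nonneg _).trans (hf 0)

lemma abs_comp_add_le (hf : ∀ y, |f y| ≤ B * (1 + |y|) ^ m) (a b : ℝ) :
    |f (a + b)| ≤ B * (1 + |a|) ^ m * (1 + |b|) ^ m := by
  have hB := nonneg_of_abs_le_mul_one_add_abs_pow hf
  calc |f (a + b)| ≤ B * (1 + |a + b|) ^ m := hf _
    _ ≤ B * ((1 + |a|) * (1 + |b|)) ^ m := by gcongr; exact one_add_abs_add_le a b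
    _ = B * (1 + |a|) ^ m * (1 + |b|) ^ m := by rw [mul_pow, mul_assoc]

lemma abs_comp_add_mul_le (hf : ∀ y, |f y| ≤ B * (1 + |y|) ^ m) (x σ z : ℝ) :
    |f (x + σ * z)| ≤ B * (1 + |x|) ^ m * (1 + |σ|) ^ m * (1 + |z|) ^ m := by
  have hB := nonneg_of_abs_le_mul_one_add_abs_pow hf
  calc |f (x + σ * z)| ≤ B * (1 + |x|) ^ m * (1 + |σ * z|) ^ m := abs_comp_add_le hf x _
    _ ≤ B * (1 + |x|) ^ m * ((1 + |σ|) * (1 + |z|)) ^ m := by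
        gcongr; exact one_add_abs_mul_le σ z
    _ = B * (1 + |x|) ^ m * (1 + |σ|) ^ m * (1 + |z|) ^ m := by rw [mul_pow]; ring

lemma abs_comp_add_mul_mul_le (hf : ∀ y, |f y| ≤ B * (1 + |y|) ^ m) (x σ z : ℝ) :
    |f (x + σ * z) * z| ≤ B * (1 + |x|) ^ m * (1 + |σ|) ^ m * (1 + |z|) ^ (m + 1) := by
  have hB := nonneg_of_abs_le_mul_one_add_abs_pow hf
  rw [abs_mul, pow_succ, ← mul_assoc]
  exact mul_le_mul (abs_comp_add_mul_le hf x σ z) (by linarith [abs_nonneg z])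
    (abs_nonneg z) (by positivity)

end PolynomialGrowth

lemma integrable_one_add_abs_pow_gaussianReal (μ : ℝ) (V : ℝ≥0) (m : ℕ) :
    Integrable (fun z => (1 + |z|) ^ m) (gaussianReal μ V) := by
  have h1 : MemLp (fun _ : ℝ => (1 : ℝ)) m (gaussianReal μ V) := memLp_const 1
  have h2 : MemLp (fun z : ℝ => |z|) m (gaussianReal μ V) :=
    (memLp_id_gaussianReal' m (ENNReal.natCast_ne_top m)).norm
  refine (h1.add h2).integrable_norm_pow'.congr (ae_of_all _ fun z => ?_)
  simp only [Pi.add_apply, Real.norm_eq_abs, abs_of_nonneg (by positivity : (0 : ℝ) ≤ 1 + |z|)]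

lemma integrable_of_abs_le_one_add_abs_pow {ν : Measure ℝ}
    (hν : ∀ m : ℕ, Integrable (fun z => (1 + |z|) ^ m) ν) {g : ℝ → ℝ}
    (hg : AEStronglyMeasurable g ν) {B : ℝ} {m : ℕ} (hgB : ∀ z, |g z| ≤ B * (1 + |z|) ^ m) :
    Integrable g ν :=
  ((hν m).const_mul B).mono' hg (ae_of_all _ hgB)

section ParametricIntegrals

variable {ν : Measure ℝ} (hν : ∀ m : ℕ, Integrable (fun z => (1 + |z|) ^ m) ν)
  {f f' : ℝ → ℝ} (hf : ∀ y, HasDerivAt f (f' y) y) {B : ℝ} {m : ℕ}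
  (hfB : ∀ y, |f y| ≤ B * (1 + |y|) ^ m) (hf'B : ∀ y, |f' y| ≤ B * (1 + |y|) ^ m)
include hν hf hfB hf'B

lemma hasDerivAt_integral_comp_add (x : ℝ) :
    HasDerivAt (fun y => ∫ z, f (y + z) ∂ν) (∫ z, f' (x + z) ∂ν) x := by
  have hfc : Continuous f := continuous_iff_continuousAt.2 fun y => (hf y).continuousAt
  have hf'm : Measurable f' := (funext fun y => (hf y).deriv).symm ▸ measurable_deriv f
  have hbound : ∀ y ∈ Metric.ball x 1, ∀ z, |f' (y + z)| ≤ B * (2 + |x|) ^ m * (1 + |z|) ^ m :=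
    fun y hy z => (abs_comp_add_le hf'B y z).trans <| by
      have := nonneg_of_abs_le_mul_one_add_abs_pow hf'B
      gcongr B * ?_ ^ m * _; exact one_add_abs_le_of_mem_ball hy
  refine (hasDerivAt_integral_of_dominated_loc_of_deriv_le (Metric.ball_mem_nhds x one_pos)
    (Eventually.of_forall fun y => (hfc.comp (continuous_const_add y)).aestronglyMeasurable)
    (integrable_of_abs_le_one_add_abs_pow hν
      (hfc.comp (continuous_const_add x)).aestronglyMeasurable (abs_comp_add_le hfB x))
    (hf'm.comp (measurable_const_add x)).aestronglyMeasurable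
    (ae_of_all _ fun z y hy => hbound y hy z) ((hν m).const_mul _)
    (ae_of_all _ fun z y _ => ?_)).2
  exact (hf (y + z)).comp_add_const y z

lemma hasDerivAt_integral_comp_add_mul (x σ₀ : ℝ) :
    HasDerivAt (fun σ => ∫ z, f (x + σ * z) ∂ν) (∫ z, f' (x + σ₀ * z) * z ∂ν) σ₀ := by
  have hfc : Continuous f := continuous_iff_continuousAt.2 fun y => (hf y).continuousAt
  have hf'm : Measurable f' := (funext fun y => (hf y).deriv).symm ▸ measurable_deriv f
  have hbound : ∀ σ ∈ Metric.ball σ₀ 1, ∀ z,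
      |f' (x + σ * z) * z| ≤ B * (1 + |x|) ^ m * (2 + |σ₀|) ^ m * (1 + |z|) ^ (m + 1) :=
    fun σ hσ z => (abs_comp_add_mul_mul_le hf'B x σ z).trans <| by
      have := nonneg_of_abs_le_mul_one_add_abs_pow hf'B
      gcongr B * _ * ?_ ^ m * _; exact one_add_abs_le_of_mem_ball hσ
  refine (hasDerivAt_integral_of_dominated_loc_of_deriv_le (Metric.ball_mem_nhds σ₀ one_pos)
    (Eventually.of_forall fun σ =>
      (by fun_prop : Continuous fun z => f (x + σ * z)).aestronglyMeasurable)
    (integrable_of_abs_le_one_add_abs_pow hν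
      (by fun_prop : Continuous fun z => f (x + σ₀ * z)).aestronglyMeasurable
      (abs_comp_add_mul_le hfB x σ₀))
    ((hf'm.comp (by fun_prop)).mul measurable_id).aestronglyMeasurable
    (ae_of_all _ fun z σ hσ => hbound σ hσ z) ((hν (m + 1)).const_mul _)
    (ae_of_all _ fun z σ _ => ?_)).2
  have := (hf (x + σ * z)).comp σ (((hasDerivAt_id' σ).mul_const z).const_add x)
  rwa [one_mul] at this

end ParametricIntegrals

section Stein

variable {μ : ℝ} {V : ℝ≥0}

lemma hasDerivAt_gaussianPDFReal (μ : ℝ) (V : ℝ≥0) (x : ℝ) :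
    HasDerivAt (gaussianPDFReal μ V) (-((x - μ) / V) * gaussianPDFReal μ V x) x := by
  have hexponent : HasDerivAt (fun y => -(y - μ) ^ 2 / (2 * V)) (-((x - μ) / V)) x := by
    refine ((((hasDerivAt_id' x).sub_const μ).fun_pow 2).fun_neg.div_const
      (2 * (V : ℝ))).congr_deriv ?_
    by_cases hV : (V : ℝ) = 0
    · simp [hV]
    · field_simp; ring
  rw [gaussianPDFReal_def]
  exact (hexponent.exp.const_mul _).congr_deriv (by ring)

lemma integrable_gaussianReal_iff (hV : V ≠ 0) {g : ℝ → ℝ} :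
    Integrable g (gaussianReal μ V) ↔ Integrable (fun x => gaussianPDFReal μ V x * g x) := by
  rw [gaussianReal_of_var_ne_zero μ hV, integrable_withDensity_iff_integrable_smul'
    (measurable_gaussianPDF μ V) (ae_of_all _ fun _ => gaussianPDF_lt_top)]
  simp [gaussianPDF, ENNReal.toReal_ofReal (gaussianPDFReal_nonneg μ V _)]

lemma integral_sub_mul_gaussianReal {ψ ψ' : ℝ → ℝ} (hψ : ∀ z, HasDerivAt ψ (ψ' z) z)
    (hψ_int : Integrable ψ (gaussianReal μ V)) (hψ'_int : Integrable ψ' (gaussianReal μ V))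
    (hmul_int : Integrable (fun z => (z - μ) * ψ z) (gaussianReal μ V)) :
    ∫ z, (z - μ) * ψ z ∂gaussianReal μ V = V * ∫ z, ψ' z ∂gaussianReal μ V := by
  by_cases hV : V = 0
  · simp [hV]
  have hV' : (V : ℝ) ≠ 0 := by exact_mod_cast hV
  have hibp := integral_mul_deriv_eq_deriv_mul_of_integrable (u := ψ) (u' := ψ')
    (v := gaussianPDFReal μ V) (v' := fun z => -((z - μ) / V) * gaussianPDFReal μ V z)
    (fun z _ => hψ z) (fun z _ => hasDerivAt_gaussianPDFReal μ V z) ?_ ?_ ?_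
  · have hL : ∫ z, ψ z * (-((z - μ) / V) * gaussianPDFReal μ V z) =
        -(V : ℝ)⁻¹ * ∫ z, gaussianPDFReal μ V z * ((z - μ) * ψ z) := by
      rw [← integral_const_mul]; congr 1; ext z; field_simp
    simp only [hL, mul_comm (ψ' _)] at hibp
    simp only [integral_gaussianReal_eq_integral_smul hV, smul_eq_mul]
    calc ∫ z, gaussianPDFReal μ V z * ((z - μ) * ψ z)
        = -(V : ℝ) * (-(V : ℝ)⁻¹ * ∫ z, gaussianPDFReal μ V z * ((z - μ) * ψ z)) := by
          field_simp
      _ = V * ∫ z, gaussianPDFReal μ V z * ψ' z := by rw [hibp]; ring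
  · refine (((integrable_gaussianReal_iff hV).1 hmul_int).const_mul (-(V : ℝ)⁻¹)).congr
      (ae_of_all _ fun z => ?_)
    simp only [Pi.mul_apply]; field_simp
  · refine ((integrable_gaussianReal_iff hV).1 hψ'_int).congr (ae_of_all _ fun z => ?_)
    simp only [Pi.mul_apply]; ring
  · refine ((integrable_gaussianReal_iff hV).1 hψ_int).congr (ae_of_all _ fun z => ?_)
    simp only [Pi.mul_apply]; ring

end Stein

lemma integral_gaussianReal_eq_integral_sqrt_mul {w : ℝ} (hw : 0 < w) (g : ℝ → ℝ) :
    ∫ z, g z ∂gaussianReal 0 w.toNNReal = ∫ z, g (√w * z) ∂gaussianReal 0 1 := by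
  have hmap : (gaussianReal 0 1).map (√w * ·) = gaussianReal 0 w.toNNReal := by
    rw [gaussianReal_map_const_mul, mul_zero, mul_one]
    congr 1
    ext
    simp [Real.sq_sqrt hw.le, Real.coe_toNNReal _ hw.le]
  rw [← hmap, (measurableEmbedding_mulLeft₀ (sqrt_pos.2 hw).ne').integral_map]

lemma hasDerivAt_integral_gaussianReal_variance {f f' f'' : ℝ → ℝ}
    (hf : ∀ y, HasDerivAt f (f' y) y) (hf' : ∀ y, HasDerivAt f' (f'' y) y) {B : ℝ} {m : ℕ}
    (hfB : ∀ y, |f y| ≤ B * (1 + |y|) ^ m) (hf'B : ∀ y, |f' y| ≤ B * (1 + |y|) ^ m)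
    (hf''B : ∀ y, |f'' y| ≤ B * (1 + |y|) ^ m) (x : ℝ) {V : ℝ} (hV : 0 < V) :
    HasDerivAt (fun w : ℝ => ∫ z, f (x + z) ∂gaussianReal 0 w.toNNReal)
      ((1 / 2) * ∫ z, f'' (x + z) ∂gaussianReal 0 V.toNNReal) V := by
  have hν := integrable_one_add_abs_pow_gaussianReal 0 1
  have hf'c : Continuous f' := continuous_iff_continuousAt.2 fun y => (hf' y).continuousAt
  have hf''m : Measurable f'' := (funext fun y => (hf' y).deriv).symm ▸ measurable_deriv f'
  have hstein : ∫ z, f' (x + √V * z) * z ∂gaussianReal 0 1 =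
      √V * ∫ z, f'' (x + √V * z) ∂gaussianReal 0 1 := by
    have h := integral_sub_mul_gaussianReal (μ := 0) (V := 1) (ψ := fun z => f' (x + √V * z))
      (ψ' := fun z => f'' (x + √V * z) * √V)
      (fun z => by
        have := (hf' (x + √V * z)).comp z (((hasDerivAt_id' z).const_mul √V).const_add x)
        rwa [mul_one] at this)
      (integrable_of_abs_le_one_add_abs_pow hν (by fun_prop) (abs_comp_add_mul_le hf'B x √V))
      ((integrable_of_abs_le_one_add_abs_pow hν (hf''m.comp (by fun_prop)).aestronglyMeasurable
        (abs_comp_add_mul_le hf''B x √V)).mul_const √V)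
      ((integrable_of_abs_le_one_add_abs_pow hν (by fun_prop)
        (abs_comp_add_mul_mul_le hf'B x √V)).congr (ae_of_all _ fun z => by ring))
    simp only [sub_zero, NNReal.coe_one, one_mul, integral_mul_const] at h
    rw [mul_comm, ← h]
    exact integral_congr_ae (ae_of_all _ fun z => mul_comm _ _)
  have hchain := (hasDerivAt_integral_comp_add_mul hν hf hfB hf'B x √V).comp V
    (hasDerivAt_sqrt hV.ne')
  refine (hchain.congr_of_eventuallyEq ?_).congr_deriv ?_
  · filter_upwards [lt_mem_nhds hV] with w hw
    exact integral_gaussianReal_eq_integral_sqrt_mul hw _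
  · rw [hstein, integral_gaussianReal_eq_integral_sqrt_mul hV]
    field_simp

section IntegralIoc

variable {g : ℝ → ℝ} {a b t : ℝ}

lemma hasDerivAt_setIntegral_Ioc_left (hg : ContinuousOn g (Icc a b)) (ht : t ∈ Ioo a b) :
    HasDerivAt (fun s => ∫ r in Ioc s b, g r) (-g t) t := by
  have hint : IntervalIntegrable g volume t b :=
    (hg.mono (by rw [uIcc_of_le ht.2.le]; exact Icc_subset_Icc_left ht.1.le)).intervalIntegrable
  have hmeas : StronglyMeasurableAtFilter g (𝓝 t) :=
    (hg.mono Ioo_subset_Icc_self).stronglyMeasurableAtFilter isOpen_Ioo t ht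
  refine (intervalIntegral.integral_hasDerivAt_left hint hmeas
    (hg.continuousAt (Icc_mem_nhds ht.1 ht.2))).congr_of_eventuallyEq ?_
  filter_upwards [Iio_mem_nhds ht.2] with s hs
  exact (intervalIntegral.integral_of_le (f := g) hs.le).symm

lemma setIntegral_Ioc_pos (hg : ContinuousOn g (Icc t b)) (htb : t < b)
    (hpos : ∀ r ∈ Ioo t b, 0 < g r) : 0 < ∫ r in Ioc t b, g r := by
  rw [← intervalIntegral.integral_of_le htb.le]
  exact intervalIntegral.intervalIntegral_pos_of_pos_on
    (hg.intervalIntegrable_of_Icc htb.le) hpos htb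

end IntegralIoc

theorem kolmogorov_backward_equation_gaussian_volterra_general
    (T : ℝ)
    (K : ℝ → ℝ) (hKcont : ContinuousOn K (Set.Icc 0 T))
    (hKpos : ∀ s ∈ Set.Ioc (0 : ℝ) T, 0 < K s)
    (φ : ℝ → ℝ) (hφ : ContDiff ℝ 2 φ)
    (C : ℝ) (κ : ℕ)
    (h0 : ∀ x : ℝ, |φ x| ≤ C * (1 + |x| ^ κ))
    (h1 : ∀ x : ℝ, |deriv φ x| ≤ C * (1 + |x| ^ κ))
    (h2 : ∀ x : ℝ, |deriv (deriv φ) x| ≤ C * (1 + |x| ^ κ))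
    (v : ℝ → ℝ) (hv : ∀ t : ℝ, v t = ∫ s in Set.Ioc t T, K (T - s) ^ 2)
    (u : ℝ → ℝ → ℝ)
    (hu : ∀ t x : ℝ, u t x = ∫ z, φ (x + z) ∂(gaussianReal 0 (v t).toNNReal)) :
    (∀ x : ℝ, u T x = φ x) ∧
      ∀ t ∈ Set.Ioo (0 : ℝ) T, ∀ x : ℝ,
        DifferentiableAt ℝ (fun s => u s x) t ∧
        HasDerivAt (fun y => deriv (fun y' => u t y') y)
          (∫ z, deriv (deriv φ) (x + z) ∂(gaussianReal 0 (v t).toNNReal)) x ∧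
        deriv (fun s => u s x) t +
            (1 / 2) * K (T - t) ^ 2 *
              ∫ z, deriv (deriv φ) (x + z) ∂(gaussianReal 0 (v t).toNNReal) = 0 := by
  have hφ' : ContDiff ℝ 1 (deriv φ) := hφ.deriv'
  have hdφ (y : ℝ) : HasDerivAt φ (deriv φ y) y := (hφ.differentiable two_ne_zero y).hasDerivAt
  have hdφ' (y : ℝ) : HasDerivAt (deriv φ) (deriv (deriv φ) y) y :=
    (hφ'.differentiable one_ne_zero y).hasDerivAt
  have hb0 := abs_le_two_mul_one_add_abs_pow h0
  have hb1 := abs_le_two_mul_one_add_abs_pow h1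
  have hb2 := abs_le_two_mul_one_add_abs_pow h2
  refine ⟨fun x => ?_, fun t ht x => ?_⟩
  · rw [hu, hv, Ioc_self, Measure.restrict_empty, integral_zero_measure, Real.toNNReal_zero,
      gaussianReal_zero_var, integral_dirac, add_zero]
  have hKsq : ContinuousOn (fun r => K (T - r) ^ 2) (Icc 0 T) :=
    (hKcont.comp (by fun_prop) fun r hr => ⟨by linarith [hr.2], by linarith [hr.1]⟩).pow 2
  have hvt : 0 < v t := hv t ▸ setIntegral_Ioc_pos (hKsq.mono (Icc_subset_Icc_left ht.1.le))
    ht.2 fun r hr => pow_pos (hKpos _ ⟨by linarith [hr.2], by linarith [hr.1, ht.1]⟩) 2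
  have hv' : HasDerivAt v (-K (T - t) ^ 2) t :=
    funext hv ▸ hasDerivAt_setIntegral_Ioc_left hKsq ht
  have htime : HasDerivAt (fun s => u s x)
      ((1 / 2) * (∫ z, deriv (deriv φ) (x + z) ∂gaussianReal 0 (v t).toNNReal) *
        -K (T - t) ^ 2) t :=
    ((hasDerivAt_integral_gaussianReal_variance hdφ hdφ' hb0 hb1 hb2 x hvt).comp t
      hv').congr_of_eventuallyEq (Eventually.of_forall fun s => hu s x)
  have hν := integrable_one_add_abs_pow_gaussianReal 0 (v t).toNNReal
  have hspace : (fun y => deriv (fun y' => u t y') y) =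
      fun y => ∫ z, deriv φ (y + z) ∂gaussianReal 0 (v t).toNNReal := by
    simp only [hu]
    exact funext fun y => (hasDerivAt_integral_comp_add hν hdφ hb0 hb1 y).deriv
  refine ⟨htime.differentiableAt, hspace ▸ hasDerivAt_integral_comp_add hν hdφ' hb1 hb2 x, ?_⟩
  rw [htime.deriv]
  ring

/-- Kolmogorov backward equation for the Gaussian Volterra marginal:
with `v(t) = ∫_t^T K(T-s)² ds` and `u(t,x) = ∫ φ(x+z) dγ_{v(t)}(z)`, for every `t ∈ (0,T)`
and `x ∈ ℝ` the time derivative `∂_t u(t,x)` exists, the second space derivative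
`∂²_{xx} u(t,x)` exists and equals `∫ φ''(x+z) dγ_{v(t)}(z)`, and
`∂_t u + (1/2) K(T-t)² ∂²_{xx} u = 0`; moreover `u(T,·) = φ`. -/
theorem kolmogorov_backward_equation_gaussian_volterra
    (T : ℝ) (hT : 0 < T)
    (K : ℝ → ℝ) (hKcont : ContinuousOn K (Set.Icc 0 T))
    (hKpos : ∀ s ∈ Set.Ioc (0 : ℝ) T, 0 < K s)
    (φ : ℝ → ℝ) (hφ : ContDiff ℝ 2 φ)
    (C : ℝ) (hC : 0 ≤ C) (κ : ℕ)
    (h0 : ∀ x : ℝ, |φ x| ≤ C * (1 + |x| ^ κ))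
    (h1 : ∀ x : ℝ, |deriv φ x| ≤ C * (1 + |x| ^ κ))
    (h2 : ∀ x : ℝ, |deriv (deriv φ) x| ≤ C * (1 + |x| ^ κ))
    (v : ℝ → ℝ) (hv : ∀ t : ℝ, v t = ∫ s in Set.Ioc t T, K (T - s) ^ 2)
    (u : ℝ → ℝ → ℝ)
    (hu : ∀ t x : ℝ, u t x = ∫ z, φ (x + z) ∂(gaussianReal 0 (v t).toNNReal)) :
    (∀ x : ℝ, u T x = φ x) ∧
      ∀ t ∈ Set.Ioo (0 : ℝ) T, ∀ x : ℝ,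
        DifferentiableAt ℝ (fun s => u s x) t ∧
        HasDerivAt (fun y => deriv (fun y' => u t y') y)
          (∫ z, deriv (deriv φ) (x + z) ∂(gaussianReal 0 (v t).toNNReal)) x ∧
        deriv (fun s => u s x) t +
            (1 / 2) * K (T - t) ^ 2 *
              ∫ z, deriv (deriv φ) (x + z) ∂(gaussianReal 0 (v t).toNNReal) = 0 :=
  kolmogorov_backward_equation_gaussian_volterra_general T K hKcont hKpos φ hφ C κ h0 h1 h2 v hv u
    hu
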